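/- Under the discretized (Galerkin) piezoelectric setting: let T > 0, let f : ℝ → ℝⁿ be continuously differentiable, let g : ℝ → ℝᵏ be twice continuously differentiable, and let (u, φ) solve the discretized piezoelectric system on [0, T] with u three times continuously differentiable and φ twice continuously differentiable. Then for every t ∈ [0, T] the differentiated energy identity holds: ⟨M u''(t), u''(t)⟩ + ⟨K u'(t), u'(t)⟩ + ⟨A φ'(t), φ'(t)⟩ + 2α ∫₀ᵗ ⟨M u''(s), u''(s)⟩ ds + 2β ∫₀ᵗ ⟨K u''(s), u''(s)⟩ ds = ⟨M u''(0), u''(0)⟩ + ⟨K u'(0), u'(0)⟩ + ⟨A φ'(0), φ'(0)⟩ + 2 ∫₀ᵗ ⟨f'(s), u''(s)⟩ ds − 2 ∫₀ᵗ ⟨g''(s), φ'(s)⟩ ds. -/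

import Mathlib

/-!
Differentiating the system in time shows that `(u', φ')` solves it again, with forcing
`(f', g')`, so the claim is the ordinary energy identity of that system. For the latter, pair
the equation of motion with `u'`: by the constraint and symmetry of `A`, the coupling term
`⟨C φ, u'⟩ = ⟨φ, Cᵀ u'⟩ = ⟨A φ, φ'⟩ + ⟨g', φ⟩` cancels the rate of the electric energy, leaving
`d/dt (⟨M u', u'⟩ + ⟨K u, u⟩ + ⟨A φ, φ⟩) = 2⟨f, u'⟩ - 2⟨g', φ⟩ - 2α⟨M u', u'⟩ - 2β⟨K u', u'⟩`;
integrate. Everything is differentiated on the open interval only, where an identity can be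
differentiated without one-sided derivatives at the endpoints.
-/

open MeasureTheory Matrix Set Filter

/-- The pair `(u, φ)` (with first and second derivatives `u'`, `u''` of `u`) solves the
discretized (Galerkin) piezoelectric system with mass matrix `M`, stiffness matrix `K`,
dielectric matrix `A`, piezoelectric coupling matrix `C`, Rayleigh damping parameters
`α, β` and forcing terms `f, g` on the time set `I`. -/
def PiezoSolves {n k : ℕ} (M K : Matrix (Fin n) (Fin n) ℝ)
    (A : Matrix (Fin k) (Fin k) ℝ) (C : Matrix (Fin n) (Fin k) ℝ)
    (α β : ℝ) (f : ℝ → Fin n → ℝ) (g : ℝ → Fin k → ℝ)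
    (u u' u'' : ℝ → Fin n → ℝ) (φ : ℝ → Fin k → ℝ) (I : Set ℝ) : Prop :=
  (∀ t ∈ I, HasDerivAt u (u' t) t) ∧
  (∀ t ∈ I, HasDerivAt u' (u'' t) t) ∧
  (∀ t ∈ I,
    M.mulVec (u'' t) + α • M.mulVec (u' t) + K.mulVec (u t)
      + β • K.mulVec (u' t) + C.mulVec (φ t) = f t) ∧
  (∀ t ∈ I, Cᵀ.mulVec (u t) - A.mulVec (φ t) = g t)

section Calculus

variable {𝕜 : Type*} [NontriviallyNormedField 𝕜] {ι κ : Type*} [Fintype ι]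

theorem HasDerivAt.matrix_mulVec (B : Matrix κ ι 𝕜) {v : 𝕜 → ι → 𝕜} {v' : ι → 𝕜} {t : 𝕜}
    (hv : HasDerivAt v v' t) : HasDerivAt (fun s => B *ᵥ v s) (B *ᵥ v') t := by
  rw [hasDerivAt_pi] at hv ⊢
  exact fun i => HasDerivAt.fun_sum fun j _ => (hv j).const_mul (B i j)

theorem HasDerivAt.dotProduct {v w : 𝕜 → ι → 𝕜} {v' w' : ι → 𝕜} {t : 𝕜}
    (hv : HasDerivAt v v' t) (hw : HasDerivAt w w' t) :
    HasDerivAt (fun s => v s ⬝ᵥ w s) (v' ⬝ᵥ w t + v t ⬝ᵥ w') t := by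
  rw [hasDerivAt_pi] at hv hw
  simp only [_root_.dotProduct, ← Finset.sum_add_distrib]
  exact HasDerivAt.fun_sum fun i _ => (hv i).mul (hw i)

theorem Matrix.IsSymm.mulVec_dotProduct_comm {R : Type*} [CommSemiring R] {B : Matrix ι ι R}
    (hB : B.IsSymm) (x y : ι → R) : B *ᵥ x ⬝ᵥ y = B *ᵥ y ⬝ᵥ x := by
  rw [dotProduct_comm, ← dotProduct_transpose_mulVec, hB.eq, dotProduct_comm]

theorem HasDerivAt.mulVec_dotProduct_self {B : Matrix ι ι 𝕜} (hB : B.IsSymm)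
    {v : 𝕜 → ι → 𝕜} {v' : ι → 𝕜} {t : 𝕜} (hv : HasDerivAt v v' t) :
    HasDerivAt (fun s => B *ᵥ v s ⬝ᵥ v s) (2 * (B *ᵥ v t ⬝ᵥ v')) t := by
  convert (hv.matrix_mulVec B).dotProduct hv using 1
  rw [hB.mulVec_dotProduct_comm v' (v t)]
  ring

theorem HasDerivAt.unique_of_eqOn {E : Type*} [NormedAddCommGroup E] [NormedSpace 𝕜 E]
    {F G : 𝕜 → E} {F' G' : E} {s : Set 𝕜} {t : 𝕜} (hF : HasDerivAt F F' t)
    (hG : HasDerivAt G G' t) (hs : IsOpen s) (ht : t ∈ s) (hFG : EqOn F G s) : F' = G' :=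
  hF.unique (hG.congr_of_eventuallyEq (eventually_of_mem (hs.mem_nhds ht) hFG))

end Calculus

theorem piezo_power_balance {R : Type*} [CommRing R] {ι κ : Type*} [Fintype ι] [Fintype κ]
    {M K : Matrix ι ι R} {A : Matrix κ κ R} {C : Matrix ι κ R} {α β : R}
    (hM : M.IsSymm) (hA : A.IsSymm) {x v a F : ι → R} {p q G : κ → R}
    (h₁ : M *ᵥ a + α • M *ᵥ v + K *ᵥ x + β • K *ᵥ v + C *ᵥ p = F)
    (h₂ : Cᵀ *ᵥ v - A *ᵥ q = G) :
    M *ᵥ v ⬝ᵥ a + K *ᵥ x ⬝ᵥ v + A *ᵥ p ⬝ᵥ q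
      = F ⬝ᵥ v - G ⬝ᵥ p - α * (M *ᵥ v ⬝ᵥ v) - β * (K *ᵥ v ⬝ᵥ v) := by
  have hC : C *ᵥ p ⬝ᵥ v = Cᵀ *ᵥ v ⬝ᵥ p := by
    rw [dotProduct_comm, ← dotProduct_transpose_mulVec, dotProduct_comm]
  subst h₁ h₂
  simp only [add_dotProduct, sub_dotProduct, smul_dotProduct, smul_eq_mul, hC,
    hM.mulVec_dotProduct_comm v a, hA.mulVec_dotProduct_comm q p]
  ring

def piezoEnergy {n k : ℕ} (M K : Matrix (Fin n) (Fin n) ℝ) (A : Matrix (Fin k) (Fin k) ℝ)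
    (v v' : Fin n → ℝ) (ψ : Fin k → ℝ) : ℝ :=
  M *ᵥ v' ⬝ᵥ v' + K *ᵥ v ⬝ᵥ v + A *ᵥ ψ ⬝ᵥ ψ

namespace PiezoSolves

variable {n k : ℕ} {M K : Matrix (Fin n) (Fin n) ℝ} {A : Matrix (Fin k) (Fin k) ℝ}
  {C : Matrix (Fin n) (Fin k) ℝ} {α β : ℝ} {f f' : ℝ → Fin n → ℝ} {g g' : ℝ → Fin k → ℝ}
  {u u' u'' u''' : ℝ → Fin n → ℝ} {φ φ' : ℝ → Fin k → ℝ} {I : Set ℝ}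

theorem mono (hsol : PiezoSolves M K A C α β f g u u' u'' φ I) {J : Set ℝ} (hJ : J ⊆ I) :
    PiezoSolves M K A C α β f g u u' u'' φ J :=
  ⟨fun t ht => hsol.1 t (hJ ht), fun t ht => hsol.2.1 t (hJ ht),
    fun t ht => hsol.2.2.1 t (hJ ht), fun t ht => hsol.2.2.2 t (hJ ht)⟩

theorem constraint_time_deriv (hsol : PiezoSolves M K A C α β f g u u' u'' φ I) (hI : IsOpen I)
    (hφ : ∀ t ∈ I, HasDerivAt φ (φ' t) t) (hg : ∀ t ∈ I, HasDerivAt g (g' t) t) :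
    ∀ t ∈ I, Cᵀ *ᵥ u' t - A *ᵥ φ' t = g' t := fun t ht =>
  (((hsol.1 t ht).matrix_mulVec Cᵀ).sub ((hφ t ht).matrix_mulVec A)).unique_of_eqOn
    (hg t ht) hI ht hsol.2.2.2

theorem time_deriv (hsol : PiezoSolves M K A C α β f g u u' u'' φ I) (hI : IsOpen I)
    (hf : ∀ t ∈ I, HasDerivAt f (f' t) t) (hg : ∀ t ∈ I, HasDerivAt g (g' t) t)
    (hu'' : ∀ t ∈ I, HasDerivAt u'' (u''' t) t) (hφ : ∀ t ∈ I, HasDerivAt φ (φ' t) t) :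
    PiezoSolves M K A C α β f' g' u' u'' u''' φ' I := by
  refine ⟨hsol.2.1, hu'', fun t ht => ?_, hsol.constraint_time_deriv hI hφ hg⟩
  have hLHS := (((((hu'' t ht).matrix_mulVec M).add
    (((hsol.2.1 t ht).matrix_mulVec M).const_smul α)).add ((hsol.1 t ht).matrix_mulVec K)).add
    (((hsol.2.1 t ht).matrix_mulVec K).const_smul β)).add ((hφ t ht).matrix_mulVec C)
  exact hLHS.unique_of_eqOn (hf t ht) hI ht hsol.2.2.1

theorem hasDerivAt_energy (hM : M.IsSymm) (hK : K.IsSymm) (hA : A.IsSymm)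
    (hsol : PiezoSolves M K A C α β f g u u' u'' φ I) (hI : IsOpen I)
    (hφ : ∀ t ∈ I, HasDerivAt φ (φ' t) t) (hg : ∀ t ∈ I, HasDerivAt g (g' t) t)
    {t : ℝ} (ht : t ∈ I) :
    HasDerivAt (fun s => piezoEnergy M K A (u s) (u' s) (φ s))
      (2 * (f t ⬝ᵥ u' t) - 2 * (g' t ⬝ᵥ φ t) - 2 * α * (M *ᵥ u' t ⬝ᵥ u' t)
        - 2 * β * (K *ᵥ u' t ⬝ᵥ u' t)) t := by
  refine (((hsol.2.1 t ht).mulVec_dotProduct_self hM).add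
    ((hsol.1 t ht).mulVec_dotProduct_self hK)).add
    ((hφ t ht).mulVec_dotProduct_self hA) |>.congr_deriv ?_
  rw [← mul_add, ← mul_add, piezo_power_balance hM hA (hsol.2.2.1 t ht)
    (hsol.constraint_time_deriv hI hφ hg t ht)]
  ring

theorem energy_identity (hM : M.IsSymm) (hK : K.IsSymm) (hA : A.IsSymm) {a b : ℝ}
    (hsol : PiezoSolves M K A C α β f g u u' u'' φ (Ioo a b))
    (hφ : ∀ t ∈ Ioo a b, HasDerivAt φ (φ' t) t) (hg : ∀ t ∈ Ioo a b, HasDerivAt g (g' t) t)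
    (hab : a ≤ b) (hu : ContinuousOn u (Icc a b)) (hu' : ContinuousOn u' (Icc a b))
    (hφc : ContinuousOn φ (Icc a b)) (hf : ContinuousOn f (Icc a b))
    (hg' : ContinuousOn g' (Icc a b)) :
    piezoEnergy M K A (u b) (u' b) (φ b) + 2 * α * (∫ s in a..b, M *ᵥ u' s ⬝ᵥ u' s)
        + 2 * β * (∫ s in a..b, K *ᵥ u' s ⬝ᵥ u' s)
      = piezoEnergy M K A (u a) (u' a) (φ a) + 2 * (∫ s in a..b, f s ⬝ᵥ u' s)
        - 2 * (∫ s in a..b, g' s ⬝ᵥ φ s) := by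
  have hint {F : ℝ → ℝ} (hF : ContinuousOn F (Icc a b)) : IntervalIntegrable F volume a b :=
    hF.intervalIntegrable_of_Icc hab
  have hFTC := intervalIntegral.integral_eq_sub_of_hasDerivAt_of_le hab
    (by unfold piezoEnergy; fun_prop)
    (fun t ht => hsol.hasDerivAt_energy hM hK hA isOpen_Ioo hφ hg ht) (hint (by fun_prop))
  rw [intervalIntegral.integral_sub (hint (by fun_prop)) (hint (by fun_prop)),
    intervalIntegral.integral_sub (hint (by fun_prop)) (hint (by fun_prop)),
    intervalIntegral.integral_sub (hint (by fun_prop)) (hint (by fun_prop))] at hFTC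
  simp only [intervalIntegral.integral_const_mul] at hFTC
  linarith

end PiezoSolves

theorem piezo_discrete_energy_identity_diff_general {n k : ℕ}
    (M K : Matrix (Fin n) (Fin n) ℝ) (A : Matrix (Fin k) (Fin k) ℝ)
    (C : Matrix (Fin n) (Fin k) ℝ) (α β : ℝ)
    (hM : M.PosDef) (hK : K.PosSemidef) (hA : A.PosDef)
    (T : ℝ)
    (f f' : ℝ → Fin n → ℝ) (hf : ∀ t, HasDerivAt f (f' t) t) (hf' : Continuous f')
    (g g' g'' : ℝ → Fin k → ℝ)
    (hg : ∀ t, HasDerivAt g (g' t) t) (hg' : ∀ t, HasDerivAt g' (g'' t) t)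
    (hg'' : Continuous g'')
    (u u' u'' u''' : ℝ → Fin n → ℝ) (φ φ' φ'' : ℝ → Fin k → ℝ)
    (hsol : PiezoSolves M K A C α β f g u u' u'' φ (Icc 0 T))
    (hu''' : ∀ t ∈ Icc (0 : ℝ) T, HasDerivAt u'' (u''' t) t)
    (hφ' : ∀ t ∈ Icc (0 : ℝ) T, HasDerivAt φ (φ' t) t)
    (hφ'' : ∀ t ∈ Icc (0 : ℝ) T, HasDerivAt φ' (φ'' t) t) :
    ∀ t ∈ Icc (0 : ℝ) T,
      M.mulVec (u'' t) ⬝ᵥ u'' t + K.mulVec (u' t) ⬝ᵥ u' t + A.mulVec (φ' t) ⬝ᵥ φ' t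
        + 2 * α * (∫ s in (0 : ℝ)..t, M.mulVec (u'' s) ⬝ᵥ u'' s)
        + 2 * β * (∫ s in (0 : ℝ)..t, K.mulVec (u'' s) ⬝ᵥ u'' s)
      = M.mulVec (u'' 0) ⬝ᵥ u'' 0 + K.mulVec (u' 0) ⬝ᵥ u' 0 + A.mulVec (φ' 0) ⬝ᵥ φ' 0
        + 2 * (∫ s in (0 : ℝ)..t, f' s ⬝ᵥ u'' s)
        - 2 * (∫ s in (0 : ℝ)..t, g'' s ⬝ᵥ φ' s) := by
  intro t ⟨ht0, htT⟩
  have hsub : Icc 0 t ⊆ Icc 0 T := Icc_subset_Icc_right htT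
  have hIoo : Ioo 0 t ⊆ Icc 0 T := Ioo_subset_Icc_self.trans hsub
  have hdiff := (hsol.mono hIoo).time_deriv isOpen_Ioo (fun s _ => hf s) (fun s _ => hg s)
    (fun s hs => hu''' s (hIoo hs)) (fun s hs => hφ' s (hIoo hs))
  exact hdiff.energy_identity (isHermitian_iff_isSymm.1 hM.1) (isHermitian_iff_isSymm.1 hK.1)
    (isHermitian_iff_isSymm.1 hA.1)
    (fun s hs => hφ'' s (hIoo hs)) (fun s _ => hg' s) ht0
    ((HasDerivAt.continuousOn hsol.2.1).mono hsub) ((HasDerivAt.continuousOn hu''').mono hsub)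
    ((HasDerivAt.continuousOn hφ'').mono hsub) hf'.continuousOn hg''.continuousOn

/-- Differentiated energy identity (Eq. (160_neu)) for Galerkin solutions: the core of
the higher-regularity Theorem 2 at the discretized level. -/
theorem piezo_discrete_energy_identity_diff {n k : ℕ}
    (M K : Matrix (Fin n) (Fin n) ℝ) (A : Matrix (Fin k) (Fin k) ℝ)
    (C : Matrix (Fin n) (Fin k) ℝ) (α β : ℝ)
    (hM : M.PosDef) (hK : K.PosSemidef) (hA : A.PosDef)
    (hα : 0 ≤ α) (hβ : 0 ≤ β)
    (T : ℝ) (hT : 0 < T)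
    (f f' : ℝ → Fin n → ℝ) (hf : ∀ t, HasDerivAt f (f' t) t) (hf' : Continuous f')
    (g g' g'' : ℝ → Fin k → ℝ)
    (hg : ∀ t, HasDerivAt g (g' t) t) (hg' : ∀ t, HasDerivAt g' (g'' t) t)
    (hg'' : Continuous g'')
    (u u' u'' u''' : ℝ → Fin n → ℝ) (φ φ' φ'' : ℝ → Fin k → ℝ)
    (hsol : PiezoSolves M K A C α β f g u u' u'' φ (Icc 0 T))
    (hu''' : ∀ t ∈ Icc (0 : ℝ) T, HasDerivAt u'' (u''' t) t)
    (hu'''c : ContinuousOn u''' (Icc 0 T))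
    (hφ' : ∀ t ∈ Icc (0 : ℝ) T, HasDerivAt φ (φ' t) t)
    (hφ'' : ∀ t ∈ Icc (0 : ℝ) T, HasDerivAt φ' (φ'' t) t)
    (hφ''c : ContinuousOn φ'' (Icc 0 T)) :
    ∀ t ∈ Icc (0 : ℝ) T,
      M.mulVec (u'' t) ⬝ᵥ u'' t + K.mulVec (u' t) ⬝ᵥ u' t + A.mulVec (φ' t) ⬝ᵥ φ' t
        + 2 * α * (∫ s in (0 : ℝ)..t, M.mulVec (u'' s) ⬝ᵥ u'' s)
        + 2 * β * (∫ s in (0 : ℝ)..t, K.mulVec (u'' s) ⬝ᵥ u'' s)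
      = M.mulVec (u'' 0) ⬝ᵥ u'' 0 + K.mulVec (u' 0) ⬝ᵥ u' 0 + A.mulVec (φ' 0) ⬝ᵥ φ' 0
        + 2 * (∫ s in (0 : ℝ)..t, f' s ⬝ᵥ u'' s)
        - 2 * (∫ s in (0 : ℝ)..t, g'' s ⬝ᵥ φ' s) :=
  piezo_discrete_energy_identity_diff_general M K A C α β hM hK hA T f f' hf hf' g g' g'' hg hg'
    hg'' u u' u'' u''' φ φ' φ'' hsol hu''' hφ' hφ''
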